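/- Let q ∈ ℂ. The family of power series (L^{(q)}_{n,I})_{I ⊆ [n−1]} is linearly independent over ℂ for every integer n ≥ 1 if and only if q is not a root of unity (i.e. q^m ≠ 1 for every integer m ≥ 1). -/

import Mathlib

open Finset
open scoped Classical

namespace ExtPeaks

/-- `fget g j` is the `j`-th entry (1-indexed) of the sequence `g : Fin n → ℕ`,
so `fget g j = g ⟨j - 1, _⟩` for `1 ≤ j ≤ n`. -/
def fget {n : ℕ} (g : Fin n → ℕ) (j : ℕ) : ℕ :=
  if h : j - 1 < n then g ⟨j - 1, h⟩ else 0

/-- `Peak(I) = {i ∈ I : i ≥ 2 and i - 1 ∉ I}`. -/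
def peakOf (I : Finset ℕ) : Finset ℕ :=
  I.filter fun i => 2 ≤ i ∧ i - 1 ∉ I

/-- The monomial `x_{i_1} ⋯ x_{i_n}` attached to a sequence `g`, as a `Finsupp`. -/
noncomputable def monomialOf {n : ℕ} (g : Fin n → ℕ) : ℕ →₀ ℕ :=
  ∑ j, Finsupp.single (g j) 1

/-- The (finitely many) weakly increasing sequences of positive integers of length `n`,
satisfying the peak condition `i_{j-1} < i_{j+1}` for `j ∈ Peak(I)`, with monomial `d`. -/
noncomputable def Lseqs (n : ℕ) (I : Finset ℕ) (d : ℕ →₀ ℕ) : Finset (Fin n → ℕ) :=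
  (Fintype.piFinset fun _ => d.support).filter fun g =>
    (∀ j k : Fin n, j ≤ k → g j ≤ g k) ∧ (∀ j, 1 ≤ g j) ∧
    (∀ j ∈ peakOf I, fget g (j - 1) < fget g (j + 1)) ∧ monomialOf g = d

/-- The `q`-fundamental quasisymmetric function `L^{(q)}_{n,I}`, as a formal power
series in the variables `x_1, x_2, …` (defined coefficientwise). -/
noncomputable def Lq (q : ℂ) (n : ℕ) (I : Finset ℕ) : MvPowerSeries ℕ ℂ :=
  fun d => ∑ g ∈ Lseqs n I d,
    q ^ (I.filter fun j => fget g j = fget g (j + 1)).card *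
      (q + 1) ^ (Finset.image g Finset.univ).card

/-- The weakly increasing sequences of positive integers of length `s` with
`i_j = i_{j+1}` for all `j ∈ I`, with monomial `d`. -/
noncomputable def etaSeqs (s : ℕ) (I : Finset ℕ) (d : ℕ →₀ ℕ) : Finset (Fin s → ℕ) :=
  (Fintype.piFinset fun _ => d.support).filter fun g =>
    (∀ j k : Fin s, j ≤ k → g j ≤ g k) ∧ (∀ j, 1 ≤ g j) ∧
    (∀ j ∈ I, fget g j = fget g (j + 1)) ∧ monomialOf g = d

/-- The enriched `q`-monomial quasisymmetric function `η^{(q)}_{s,I}`. -/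
noncomputable def etaq (q : ℂ) (s : ℕ) (I : Finset ℕ) : MvPowerSeries ℕ ℂ :=
  fun d => ∑ g ∈ etaSeqs s I d, (q + 1) ^ (Finset.image g Finset.univ).card

/-- `I` is a `p`-extended peak set: `I ∪ {0}` contains no `p + 1` consecutive integers. -/
def IsExtPeakSet (p : ℕ) (I : Finset ℕ) : Prop :=
  ∀ a : ℕ, ¬ Finset.Icc a (a + p) ⊆ insert 0 I

/-- `s^{(p)}_n`: the number of `p`-extended peak subsets of `[n-1]`, with `s^{(p)}_0 = 0`. -/
noncomputable def sCount (p n : ℕ) : ℕ :=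
  if n = 0 then 0
  else ((Finset.Icc 1 (n - 1)).powerset.filter fun I => IsExtPeakSet p I).card

/-- The value `π(j)` of the permutation at the (1-indexed) position `j`,
as an element of `{1, …, n}`. -/
def pval {n : ℕ} (π : Equiv.Perm (Fin n)) (j : ℕ) : ℕ :=
  if h : j - 1 < n then (π ⟨j - 1, h⟩ : ℕ) + 1 else 0

/-- The descent set `Des(π) = {1 ≤ i ≤ n-1 : π(i) > π(i+1)}`. -/
def desSet {n : ℕ} (π : Equiv.Perm (Fin n)) : Finset ℕ :=
  (Finset.Icc 1 (n - 1)).filter fun i => pval π (i + 1) < pval π i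

/-- The peak set `Peak(π) = {2 ≤ i ≤ n-1 : π(i-1) < π(i) > π(i+1)}`. -/
def peakSet {n : ℕ} (π : Equiv.Perm (Fin n)) : Finset ℕ :=
  (Finset.Icc 2 (n - 1)).filter fun i =>
    pval π (i - 1) < pval π i ∧ pval π (i + 1) < pval π i

/-- The `p`-extended peak set `Peak_p(π)` of a permutation: the descents `i` such that
`i ≤ p - 1` or some position `i - j` (with `1 ≤ j ≤ p` and `i - j ≥ 1`) is not a descent. -/
def peakP {n : ℕ} (p : ℕ) (π : Equiv.Perm (Fin n)) : Finset ℕ :=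
  (desSet π).filter fun i =>
    i ≤ p - 1 ∨ ∃ j ∈ Finset.Icc 1 p, 1 ≤ i - j ∧ i - j ∉ desSet π

/-- `ρ_p = exp(-iπ(p-1)/(p+1))`. -/
noncomputable def rho (p : ℕ) : ℂ :=
  Complex.exp (-((Real.pi : ℂ) * ((p : ℂ) - 1) / ((p : ℂ) + 1)) * Complex.I)

/-- `[m]_c = 1 + c + ⋯ + c^(m-1)`. -/
noncomputable def qint (m : ℕ) (c : ℂ) : ℂ := ∑ j ∈ Finset.range m, c ^ j

/-- The entry of the transition matrix `B^{(q)}` at row `J`, column `I`: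
`Σ (-q)^{|K|} (q-1)^{|J'|}` over pairs `(J', K)` with `J' ⊆ I`, `K ⊆ Peak(I)`,
`J' ∩ K = ∅` and `J' ∪ (K-1) ∪ K = J`. -/
noncomputable def Bentry (q : ℂ) (J I : Finset ℕ) : ℂ :=
  ∑ J' ∈ I.powerset, ∑ K ∈ (peakOf I).powerset,
    if Disjoint J' K ∧ J' ∪ K.image (· - 1) ∪ K = J then
      (-q) ^ K.card * (q - 1) ^ J'.card
    else 0

/-- The collection of all subsets of `[n-1]` (the empty collection when `n = 0`,
so that `B_0` is the empty matrix). -/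
def subsetsOf (n : ℕ) : Finset (Finset ℕ) :=
  if n = 0 then ∅ else (Finset.Icc 1 (n - 1)).powerset

/-- The matrix `B_n^{(q)}`, with rows and columns indexed by the subsets of `[n-1]`. -/
noncomputable def Bmat (q : ℂ) (n : ℕ) : Matrix ↥(subsetsOf n) ↥(subsetsOf n) ℂ :=
  fun J I => Bentry q J.1 I.1

/-- The entry of `A_n^{(q)}` at row `J'`, column `I'`, namely
`B_n^{(q)}(J' ∪ {n-1}, I' ∪ {n-1})`. -/
noncomputable def Aentry (q : ℂ) (n : ℕ) (J I : Finset ℕ) : ℂ :=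
  Bentry q (insert (n - 1) J) (insert (n - 1) I)

/-- The matrix `A_n^{(q)}`, with rows and columns indexed by the subsets of `[n-2]`. -/
noncomputable def Amat (q : ℂ) (n : ℕ) :
    Matrix ↥(subsetsOf (n - 1)) ↥(subsetsOf (n - 1)) ℂ :=
  fun J I => Aentry q n J.1 I.1

/-- The dimension of the kernel of (the linear map associated with) `B_n^{(q)}`. -/
noncomputable def dimKer (q : ℂ) (n : ℕ) : ℕ :=
  Module.finrank ℂ (LinearMap.ker (Matrix.mulVecLin (Bmat q n)))

/-!
Expanding `L^{(q)}_{n,I}` over weakly increasing sequences `g`, the term of `g` depends on `I`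
only through `peakCoeff q E I`, where `E` is the set of positions `j` with `g_j = g_{j+1}`: it is
`q^{|I ∩ E|}`, or `0` if some peak `j` of `I` has `j - 1, j ∈ E`.

If `q^m = 1`, then for `n = 2m` the alternating sum `Σ_I (-1)^{|I|} L_{n,I}` vanishes: when
`E ≠ [n-1]`, toggling a position `i ∉ E` in `I` is a sign-reversing involution, and when
`E = [n-1]` only the peak-free sets `I = [t]` survive, giving `(1 + q) Σ_{t<n} (-q)^t = 1 - (-q)^n`.

Conversely, the coefficient of `L_{n,I}` at the monomial of the sequence whose equality set is
`E` is `peakCoeff q E I` times a nonzero constant, so it suffices that the matrix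
`(peakCoeff q E I)_{E,I ⊆ [m]}` is nonsingular. Eliminating the largest element `m` reduces it
to a matrix of the same shape for `[m-1]` in which some entries carry a factor
`[p]_{-q} = 1 - q + ⋯ + (-q)^{p-1}`; these factors are nonzero when `q` is not a root of unity.
-/

section PeakCoeff

variable {R : Type*} [CommRing R]

def peakCoeff (q : R) (E J : Finset ℕ) : R :=
  if ∀ j ∈ peakOf J, ¬(j - 1 ∈ E ∧ j ∈ E) then q ^ (J ∩ E).card else 0

lemma mem_peakOf {I : Finset ℕ} {j : ℕ} : j ∈ peakOf I ↔ j ∈ I ∧ 2 ≤ j ∧ j - 1 ∉ I :=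
  mem_filter

lemma peakCoeff_insert_of_notMem {q : R} {E J : Finset ℕ} {i : ℕ} (hiE : i ∉ E) :
    peakCoeff q E (insert i J) = peakCoeff q E J := by
  have hpeak : (∀ j ∈ peakOf (insert i J), ¬(j - 1 ∈ E ∧ j ∈ E)) ↔
      ∀ j ∈ peakOf J, ¬(j - 1 ∈ E ∧ j ∈ E) := by
    simp only [mem_peakOf, mem_insert]
    constructor
    · intro h j ⟨hjJ, hj2, hj1⟩ ⟨h1, h2⟩
      by_cases hji : j - 1 = i
      · exact hiE (hji ▸ h1)
      · exact h j ⟨Or.inr hjJ, hj2, fun h' => h'.elim hji hj1⟩ ⟨h1, h2⟩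
    · intro h j ⟨hjJ, hj2, hj1⟩ ⟨h1, h2⟩
      rcases hjJ with rfl | hjJ
      · exact hiE h2
      · exact h j ⟨hjJ, hj2, by tauto⟩ ⟨h1, h2⟩
  rw [peakCoeff, peakCoeff, if_congr hpeak rfl rfl, insert_inter_of_notMem hiE]

lemma peakCoeff_insert_left {q : R} {E J : Finset ℕ} {i : ℕ} (hiJ : i ∉ J) (hsJ : i + 1 ∉ J) :
    peakCoeff q (insert i E) J = peakCoeff q E J := by
  have hpeak : (∀ j ∈ peakOf J, ¬(j - 1 ∈ insert i E ∧ j ∈ insert i E)) ↔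
      ∀ j ∈ peakOf J, ¬(j - 1 ∈ E ∧ j ∈ E) := by
    refine forall₂_congr fun j hj => ?_
    obtain ⟨hjJ, hj2, -⟩ := mem_peakOf.mp hj
    have : j ≠ i := fun h => hiJ (h ▸ hjJ)
    have : j - 1 ≠ i := fun h => hsJ (by rwa [← h, Nat.sub_add_cancel (by omega)])
    simp [*]
  rw [peakCoeff, peakCoeff, if_congr hpeak rfl rfl, inter_insert_of_notMem hiJ]

lemma peakCoeff_insert_insert {q : R} {E J : Finset ℕ} {i : ℕ} (hiJ : i ∉ J) (hsJ : i + 1 ∉ J)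
    (hiE : i ∉ E) (h0E : 0 ∉ E) :
    peakCoeff q (insert i E) (insert i J) =
      if i - 1 ∈ E ∧ i - 1 ∉ J then 0 else q * peakCoeff q E J := by
  have hpeak : (∀ j ∈ peakOf (insert i J), ¬(j - 1 ∈ insert i E ∧ j ∈ insert i E)) ↔
      ¬(i - 1 ∈ E ∧ i - 1 ∉ J) ∧ ∀ j ∈ peakOf J, ¬(j - 1 ∈ E ∧ j ∈ E) := by
    simp only [mem_peakOf, mem_insert]
    constructor
    · intro h
      refine ⟨fun ⟨hE, hJ⟩ => ?_, fun j ⟨hjJ, hj2, hj1⟩ ⟨h1, h2⟩ => ?_⟩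
      · have : i - 1 ≠ 0 := fun h => h0E (h ▸ hE)
        exact h i ⟨Or.inl rfl, by omega, fun h => h.elim (by omega) hJ⟩ ⟨Or.inr hE, Or.inl rfl⟩
      · have : j ≠ i := fun h => hiJ (h ▸ hjJ)
        have : j - 1 ≠ i := fun h => hsJ (by rwa [← h, Nat.sub_add_cancel (by omega)])
        exact h j ⟨Or.inr hjJ, hj2, by tauto⟩ ⟨Or.inr h1, Or.inr h2⟩
    · rintro ⟨hi, h⟩ j ⟨hjJ, hj2, hj1⟩ ⟨h1, h2⟩
      rcases hjJ with rfl | hjJ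
      · exact hi ⟨h1.resolve_left (by omega), fun h => hj1 (Or.inr h)⟩
      · have : j ≠ i := fun h => hiJ (h ▸ hjJ)
        have : j - 1 ≠ i := fun h => hj1 (Or.inl h)
        exact h j ⟨hjJ, hj2, by tauto⟩ ⟨by tauto, by tauto⟩
  have hcard : (insert i J ∩ insert i E).card = (J ∩ E).card + 1 := by
    rw [← insert_inter_distrib, card_insert_of_notMem fun h => hiJ (mem_inter.mp h).1]
  rw [peakCoeff, peakCoeff, if_congr hpeak rfl rfl, hcard]
  by_cases hbad : i - 1 ∈ E ∧ i - 1 ∉ J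
  · rw [if_neg fun h => h.1 hbad, if_pos hbad]
  · simp only [hbad, not_false_eq_true, true_and, if_false, mul_ite, mul_zero, pow_succ']

lemma peakCoeff_empty_empty (q : R) : peakCoeff q ∅ ∅ = 1 := by
  simp [peakCoeff]

lemma notMem_of_mem_powerset_Icc {a b i : ℕ} {K : Finset ℕ} (hK : K ∈ (Icc a b).powerset)
    (hi : i < a ∨ b < i) : i ∉ K := fun h => by
  have := mem_Icc.mp (mem_powerset.mp hK h)
  omega

lemma sum_powerset_Icc_one_add_one {M : Type*} [AddCommMonoid M] (m : ℕ) (f : Finset ℕ → M) :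
    ∑ J ∈ (Icc 1 (m + 1)).powerset, f J =
      ∑ K ∈ (Icc 1 m).powerset, (f K + f (insert (m + 1) K)) := by
  rw [← insert_Icc_right_eq_Icc_add_one (by omega), sum_powerset_insert (by simp),
    sum_add_distrib]

-- Eliminating `m + 1` from the system of `weightedPeakCoeff q (m + 1) p` leaves the systems of
-- weights `0` and `p + 1` at level `m`; this is why the induction on `m` runs over all `p`.
def weightedPeakCoeff (q : R) (m p : ℕ) (E J : Finset ℕ) : R :=
  peakCoeff q E J * if m ∈ E ∧ m ∉ J then 1 else ∑ i ∈ range (p + 1), (-q) ^ i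

lemma weightedPeakCoeff_zero (q : R) (m : ℕ) (E J : Finset ℕ) :
    weightedPeakCoeff q m 0 E J = peakCoeff q E J := by
  simp [weightedPeakCoeff]

lemma sum_mul_weightedPeakCoeff_add_one_of_notMem {q : R} {m p : ℕ} {E : Finset ℕ}
    (hE : m + 1 ∉ E) (v : Finset ℕ → R) :
    ∑ J ∈ (Icc 1 (m + 1)).powerset, v J * weightedPeakCoeff q (m + 1) p E J =
      (∑ K ∈ (Icc 1 m).powerset, (v K + v (insert (m + 1) K)) * peakCoeff q E K) *
        ∑ i ∈ range (p + 1), (-q) ^ i := by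
  rw [sum_powerset_Icc_one_add_one, sum_mul]
  refine sum_congr rfl fun K _ => ?_
  simp only [weightedPeakCoeff, peakCoeff_insert_of_notMem hE, hE, false_and, if_false]
  ring

lemma sum_mul_weightedPeakCoeff_add_one_insert {q : R} {m p : ℕ} {E : Finset ℕ}
    (hE : E ∈ (Icc 1 m).powerset) {v : Finset ℕ → R}
    (hv : ∀ K ∈ (Icc 1 m).powerset, v (insert (m + 1) K) = -v K) :
    ∑ J ∈ (Icc 1 (m + 1)).powerset, v J * weightedPeakCoeff q (m + 1) p (insert (m + 1) E) J =
      ∑ K ∈ (Icc 1 m).powerset, v K * weightedPeakCoeff q m (p + 1) E K := by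
  rw [sum_powerset_Icc_one_add_one]
  refine sum_congr rfl fun K hK => ?_
  have hK1 := notMem_of_mem_powerset_Icc hK (i := m + 1) (by omega)
  have hK2 := notMem_of_mem_powerset_Icc hK (i := m + 1 + 1) (by omega)
  have hE1 := notMem_of_mem_powerset_Icc hE (i := m + 1) (by omega)
  have hE0 := notMem_of_mem_powerset_Icc hE (i := 0) (by omega)
  simp only [weightedPeakCoeff, peakCoeff_insert_left hK1 hK2,
    peakCoeff_insert_insert hK1 hK2 hE1 hE0, mem_insert_self, true_and, hK1,
    not_false_eq_true, if_true, not_true_eq_false, and_false, if_false, Nat.add_sub_cancel,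
    geom_sum_succ, hv K hK]
  split_ifs <;> ring

theorem eq_zero_of_sum_mul_weightedPeakCoeff_eq_zero [IsDomain R] {q : R}
    (hq : ∀ k, ∑ i ∈ range (k + 1), (-q) ^ i ≠ 0) (m : ℕ) :
    ∀ (p : ℕ) (v : Finset ℕ → R),
      (∀ E ∈ (Icc 1 m).powerset,
        ∑ J ∈ (Icc 1 m).powerset, v J * weightedPeakCoeff q m p E J = 0) →
      ∀ J ∈ (Icc 1 m).powerset, v J = 0 := by
  induction m with
  | zero =>
    intro p v hv J hJ
    have h0 : Icc 1 0 = ∅ := rfl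
    rw [h0, powerset_empty, mem_singleton] at hJ
    subst hJ
    have h := hv ∅ (by simp)
    simp only [h0, powerset_empty, sum_singleton, weightedPeakCoeff, peakCoeff_empty_empty,
      notMem_empty, false_and, if_false, one_mul] at h
    exact (mul_eq_zero.mp h).resolve_right (hq p)
  | succ m ih =>
    intro p v hv
    have hsub : ∀ E ∈ (Icc 1 m).powerset, E ⊆ Icc 1 (m + 1) := fun E hE =>
      (mem_powerset.mp hE).trans (Icc_subset_Icc_right m.le_succ)
    have hpair : ∀ K ∈ (Icc 1 m).powerset, v K + v (insert (m + 1) K) = 0 := by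
      refine ih 0 _ fun E hE => ?_
      have h := hv E (mem_powerset.mpr (hsub E hE))
      rw [sum_mul_weightedPeakCoeff_add_one_of_notMem
        (notMem_of_mem_powerset_Icc hE (by omega))] at h
      simpa only [weightedPeakCoeff_zero] using (mul_eq_zero.mp h).resolve_right (hq p)
    have hlow : ∀ K ∈ (Icc 1 m).powerset, v K = 0 := by
      refine ih (p + 1) v fun E hE => ?_
      rw [← sum_mul_weightedPeakCoeff_add_one_insert hE fun K hK =>
        eq_neg_of_add_eq_zero_right (hpair K hK)]
      exact hv _ (mem_powerset.mpr (insert_subset (by simp) (hsub E hE)))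
    intro J hJ
    rw [← insert_Icc_right_eq_Icc_add_one (by omega), powerset_insert, mem_union,
      mem_image] at hJ
    rcases hJ with hJ | ⟨K, hK, rfl⟩
    · exact hlow J hJ
    · linear_combination hpair K hK - hlow K hK

theorem eq_zero_of_sum_mul_peakCoeff_eq_zero [IsDomain R] {q : R}
    (hq : ∀ k, ∑ i ∈ range (k + 1), (-q) ^ i ≠ 0) {m : ℕ} {v : Finset ℕ → R}
    (hv : ∀ E ∈ (Icc 1 m).powerset, ∑ J ∈ (Icc 1 m).powerset, v J * peakCoeff q E J = 0) :
    ∀ J ∈ (Icc 1 m).powerset, v J = 0 :=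
  eq_zero_of_sum_mul_weightedPeakCoeff_eq_zero hq m 0 v (by simpa only [weightedPeakCoeff_zero])

lemma sum_neg_one_pow_mul_peakCoeff_eq_zero_of_mem_of_notMem (q : R) {S E : Finset ℕ} {i : ℕ}
    (hiS : i ∈ S) (hiE : i ∉ E) :
    ∑ J ∈ S.powerset, (-1) ^ J.card * peakCoeff q E J = 0 := by
  rw [← insert_erase hiS, sum_powerset_insert (notMem_erase i S), ← sum_add_distrib]
  refine sum_eq_zero fun J hJ => ?_
  have hiJ : i ∉ J := fun h => notMem_erase i S (mem_powerset.mp hJ h)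
  rw [card_insert_of_notMem hiJ, peakCoeff_insert_of_notMem hiE]
  ring

lemma peakOf_Icc_one (t : ℕ) : peakOf (Icc 1 t) = ∅ := by
  ext j
  simp only [mem_peakOf, mem_Icc, notMem_empty, iff_false]
  omega

lemma Icc_one_subset_of_peakOf_eq_empty {J : Finset ℕ} (hJ : peakOf J = ∅) :
    ∀ j ∈ J, Icc 1 j ⊆ J := by
  intro j
  induction j with
  | zero => simp
  | succ j ih =>
    intro hj
    rcases Nat.eq_zero_or_pos j with rfl | hpos
    · simpa using hj
    have hjJ : j ∈ J := by
      by_contra h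
      have : j + 1 ∈ peakOf J := mem_peakOf.mpr ⟨hj, by omega, by simpa using h⟩
      simp [hJ] at this
    rw [← insert_Icc_right_eq_Icc_add_one (by omega)]
    exact insert_subset hj (ih hjJ)

lemma filter_peakOf_eq_empty_powerset_Icc (N : ℕ) :
    (Icc 1 N).powerset.filter (fun J => peakOf J = ∅) = (range (N + 1)).image (Icc 1) := by
  ext J
  simp only [mem_filter, mem_powerset, mem_image, mem_range]
  constructor
  · rintro ⟨hJN, hJ⟩
    rcases J.eq_empty_or_nonempty with rfl | hne
    · exact ⟨0, by omega, rfl⟩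
    have hmax := mem_Icc.mp (hJN (J.max'_mem hne))
    refine ⟨J.max' hne, by omega, subset_antisymm
      (Icc_one_subset_of_peakOf_eq_empty hJ _ (J.max'_mem hne)) fun j hj => ?_⟩
    exact mem_Icc.mpr ⟨(mem_Icc.mp (hJN hj)).1, J.le_max' j hj⟩
  · rintro ⟨t, ht, rfl⟩
    exact ⟨Icc_subset_Icc_right (by omega), peakOf_Icc_one t⟩

lemma peakCoeff_Icc_one {q : R} {N : ℕ} {J : Finset ℕ} (hJ : J ⊆ Icc 1 N) :
    peakCoeff q (Icc 1 N) J = if peakOf J = ∅ then q ^ J.card else 0 := by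
  have hpeak : (∀ j ∈ peakOf J, ¬(j - 1 ∈ Icc 1 N ∧ j ∈ Icc 1 N)) ↔ peakOf J = ∅ := by
    refine ⟨fun h => eq_empty_of_forall_notMem fun j hj => h j hj ?_, fun h => by simp [h]⟩
    obtain ⟨hjJ, hj2, -⟩ := mem_peakOf.mp hj
    have := mem_Icc.mp (hJ hjJ)
    exact ⟨mem_Icc.mpr ⟨by omega, by omega⟩, hJ hjJ⟩
  rw [peakCoeff, if_congr hpeak rfl rfl, inter_eq_left.mpr hJ]

lemma sum_neg_one_pow_mul_peakCoeff_Icc_one (q : R) (N : ℕ) :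
    ∑ J ∈ (Icc 1 N).powerset, (-1) ^ J.card * peakCoeff q (Icc 1 N) J =
      ∑ t ∈ range (N + 1), (-q) ^ t := by
  calc ∑ J ∈ (Icc 1 N).powerset, (-1) ^ J.card * peakCoeff q (Icc 1 N) J
      = ∑ J ∈ (Icc 1 N).powerset.filter (fun J => peakOf J = ∅), (-q) ^ J.card := by
        rw [sum_filter]
        refine sum_congr rfl fun J hJ => ?_
        rw [peakCoeff_Icc_one (mem_powerset.mp hJ), mul_ite, mul_zero, neg_pow q]
    _ = ∑ t ∈ range (N + 1), (-q) ^ t := by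
        rw [filter_peakOf_eq_empty_powerset_Icc, sum_image fun s _ t _ h => by
          simpa using congrArg card h]
        simp

theorem one_add_mul_sum_neg_one_pow_mul_peakCoeff_eq_zero {q : R} {N : ℕ} (hq : (-q) ^ (N + 1) = 1)
    {E : Finset ℕ} (hE : E ⊆ Icc 1 N) :
    (1 + q) * ∑ J ∈ (Icc 1 N).powerset, (-1) ^ J.card * peakCoeff q E J = 0 := by
  by_cases hEN : E = Icc 1 N
  · rw [hEN, sum_neg_one_pow_mul_peakCoeff_Icc_one, ← sub_neg_eq_add, mul_neg_geom_sum, hq,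
      sub_self]
  · obtain ⟨i, hiN, hiE⟩ := not_subset.mp fun h => hEN (subset_antisymm hE h)
    rw [sum_neg_one_pow_mul_peakCoeff_eq_zero_of_mem_of_notMem q hiN hiE, mul_zero]

lemma neg_geom_sum_ne_zero {q : R} (hq : ∀ m, 1 ≤ m → q ^ m ≠ 1) (k : ℕ) :
    ∑ i ∈ range (k + 1), (-q) ^ i ≠ 0 := by
  intro h
  have hk : (-q) ^ (k + 1) = 1 := by
    linear_combination mul_neg_geom_sum (-q) (k + 1) - (1 + q) * h
  exact hq (2 * (k + 1)) (by omega) (by rw [← (even_two_mul _).neg_pow, pow_mul', hk, one_pow])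

end PeakCoeff

lemma toMultiset_monomialOf {n : ℕ} (g : Fin n → ℕ) :
    Finsupp.toMultiset (monomialOf g) = ↑(List.ofFn g) := by
  simp only [monomialOf, map_sum, Finsupp.toMultiset_single, one_nsmul, ← Fin.univ_val_map]
  rw [Finset.sum_eq_multiset_sum, ← Multiset.sum_map_singleton (univ.val.map g), Multiset.map_map]
  rfl

lemma mem_support_monomialOf {n : ℕ} (g : Fin n → ℕ) (j : Fin n) :
    g j ∈ (monomialOf g).support := by
  rw [← Finsupp.mem_toMultiset, toMultiset_monomialOf, Multiset.mem_coe, List.mem_ofFn]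
  exact ⟨j, rfl⟩

lemma eq_of_monomialOf_eq {n : ℕ} {g g' : Fin n → ℕ} (hg : Monotone g) (hg' : Monotone g')
    (h : monomialOf g = monomialOf g') : g = g' := by
  have hperm : (List.ofFn g).Perm (List.ofFn g') := by
    rw [← Multiset.coe_eq_coe, ← toMultiset_monomialOf, ← toMultiset_monomialOf, h]
  exact List.ofFn_injective (hperm.eq_of_sortedLE hg.sortedLE_ofFn hg'.sortedLE_ofFn)

lemma fget_of_lt {n : ℕ} (g : Fin n → ℕ) {j : ℕ} (h : j - 1 < n) : fget g j = g ⟨j - 1, h⟩ :=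
  dif_pos h

lemma fget_le_fget_of_monotone {n : ℕ} {g : Fin n → ℕ} (hg : Monotone g) {a b : ℕ} (ha : 1 ≤ a)
    (hab : a ≤ b) (hb : b ≤ n) : fget g a ≤ fget g b := by
  rw [fget_of_lt g (by omega), fget_of_lt g (by omega)]
  exact hg (Fin.mk_le_mk.mpr (by omega))

def eqSet {n : ℕ} (g : Fin n → ℕ) : Finset ℕ :=
  (Icc 1 (n - 1)).filter fun j => fget g j = fget g (j + 1)

lemma forall_peakOf_fget_lt_iff {n : ℕ} {g : Fin n → ℕ} (hg : Monotone g) {I : Finset ℕ}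
    (hI : I ⊆ Icc 1 (n - 1)) :
    (∀ j ∈ peakOf I, fget g (j - 1) < fget g (j + 1)) ↔
      ∀ j ∈ peakOf I, ¬(j - 1 ∈ eqSet g ∧ j ∈ eqSet g) := by
  refine forall₂_congr fun j hj => ?_
  obtain ⟨hjI, hj2, -⟩ := mem_peakOf.mp hj
  have hjn := mem_Icc.mp (hI hjI)
  have h1 := fget_le_fget_of_monotone hg (a := j - 1) (b := j) (by omega) (by omega) (by omega)
  have h2 := fget_le_fget_of_monotone hg (a := j) (b := j + 1) (by omega) (by omega) (by omega)
  simp only [eqSet, mem_filter, mem_Icc, Nat.sub_add_cancel (by omega : 1 ≤ j)]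
  omega

lemma filter_fget_eq_eq_inter_eqSet {n : ℕ} (g : Fin n → ℕ) {I : Finset ℕ}
    (hI : I ⊆ Icc 1 (n - 1)) :
    I.filter (fun j => fget g j = fget g (j + 1)) = I ∩ eqSet g := by
  ext j
  have := @hI j
  simp only [mem_filter, mem_inter, eqSet]
  tauto

lemma Lseqs_eq_filter (n : ℕ) (I : Finset ℕ) (d : ℕ →₀ ℕ) :
    Lseqs n I d =
      (Lseqs n ∅ d).filter fun g => ∀ j ∈ peakOf I, fget g (j - 1) < fget g (j + 1) := by
  unfold Lseqs
  rw [filter_filter]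
  refine filter_congr fun g _ => ?_
  simp only [peakOf, filter_empty, notMem_empty, IsEmpty.forall_iff, implies_true, true_and]
  tauto

lemma Lq_apply_eq_sum_peakCoeff (q : ℂ) {n : ℕ} {I : Finset ℕ} (hI : I ⊆ Icc 1 (n - 1))
    (d : ℕ →₀ ℕ) :
    Lq q n I d = ∑ g ∈ Lseqs n ∅ d, peakCoeff q (eqSet g) I * (q + 1) ^ (image g univ).card := by
  simp only [Lq, Lseqs_eq_filter n I, sum_filter]
  refine sum_congr rfl fun g hg => ?_
  have hmono : Monotone g := fun j k h => (mem_filter.mp hg).2.1 j k h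
  rw [if_congr (forall_peakOf_fget_lt_iff hmono hI) rfl rfl, filter_fget_eq_eq_inter_eqSet g hI,
    peakCoeff, ite_mul, zero_mul]

lemma Lseqs_empty_monomialOf {n : ℕ} {g : Fin n → ℕ} (hg : Monotone g) (hpos : ∀ j, 1 ≤ g j) :
    Lseqs n ∅ (monomialOf g) = {g} := by
  ext g'
  simp only [Lseqs, mem_filter, Fintype.mem_piFinset, mem_singleton, peakOf, filter_empty,
    notMem_empty, IsEmpty.forall_iff, implies_true, true_and]
  constructor
  · rintro ⟨-, hg', -, h⟩
    exact eq_of_monomialOf_eq (fun j k hjk => hg' j k hjk) hg h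
  · rintro rfl
    exact ⟨mem_support_monomialOf g', fun j k hjk => hg hjk, hpos, rfl⟩

lemma Lq_apply_monomialOf (q : ℂ) {n : ℕ} {g : Fin n → ℕ} (hg : Monotone g) (hpos : ∀ j, 1 ≤ g j)
    {I : Finset ℕ} (hI : I ⊆ Icc 1 (n - 1)) :
    Lq q n I (monomialOf g) = peakCoeff q (eqSet g) I * (q + 1) ^ (image g univ).card := by
  rw [Lq_apply_eq_sum_peakCoeff q hI, Lseqs_empty_monomialOf hg hpos, sum_singleton]

def stairSeq (n : ℕ) (E : Finset ℕ) : Fin n → ℕ := fun j => 1 + (Icc 1 (j : ℕ) \ E).card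

lemma monotone_stairSeq (n : ℕ) (E : Finset ℕ) : Monotone (stairSeq n E) := fun j k h => by
  unfold stairSeq
  gcongr
  exact h

lemma one_le_stairSeq (n : ℕ) (E : Finset ℕ) (j : Fin n) : 1 ≤ stairSeq n E j :=
  Nat.le_add_right 1 _

lemma card_Icc_one_add_one_sdiff (E : Finset ℕ) (t : ℕ) :
    (Icc 1 (t + 1) \ E).card = (Icc 1 t \ E).card + if t + 1 ∈ E then 0 else 1 := by
  rw [← insert_Icc_right_eq_Icc_add_one (by omega)]
  split_ifs with h
  · rw [insert_sdiff_of_mem _ h, add_zero]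
  · rw [insert_sdiff_of_notMem _ h, card_insert_of_notMem (by simp)]

lemma eqSet_stairSeq {n : ℕ} {E : Finset ℕ} (hE : E ⊆ Icc 1 (n - 1)) :
    eqSet (stairSeq n E) = E := by
  ext j
  simp only [eqSet, mem_filter]
  constructor
  · rintro ⟨hj, heq⟩
    obtain ⟨k, rfl⟩ : ∃ k, j = k + 1 := ⟨j - 1, by have := mem_Icc.mp hj; omega⟩
    have hk := mem_Icc.mp hj
    rw [fget_of_lt _ (by omega), fget_of_lt _ (by omega)] at heq
    simp only [stairSeq, Nat.add_sub_cancel, card_Icc_one_add_one_sdiff] at heq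
    by_contra h
    simp [h] at heq
  · intro hj
    have hk := mem_Icc.mp (hE hj)
    refine ⟨hE hj, ?_⟩
    obtain ⟨k, rfl⟩ : ∃ k, j = k + 1 := ⟨j - 1, by omega⟩
    rw [fget_of_lt _ (by omega), fget_of_lt _ (by omega)]
    simp [stairSeq, card_Icc_one_add_one_sdiff, hj]

lemma sum_neg_one_pow_smul_Lq_eq_zero {q : ℂ} {n : ℕ} (hn : 1 ≤ n) (hq : (-q) ^ n = 1) :
    ∑ J ∈ (Icc 1 (n - 1)).powerset, (-1 : ℂ) ^ J.card • Lq q n J = 0 := by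
  ext d
  simp only [map_sum, map_zero, MvPowerSeries.coeff_smul]
  simp only [MvPowerSeries.coeff_apply]
  calc ∑ J ∈ (Icc 1 (n - 1)).powerset, (-1) ^ J.card * Lq q n J d
      = ∑ J ∈ (Icc 1 (n - 1)).powerset, ∑ g ∈ Lseqs n ∅ d,
          (-1) ^ J.card * (peakCoeff q (eqSet g) J * (q + 1) ^ (image g univ).card) :=
        sum_congr rfl fun J hJ => by
          rw [Lq_apply_eq_sum_peakCoeff q (mem_powerset.mp hJ), mul_sum]
    _ = ∑ g ∈ Lseqs n ∅ d, ∑ J ∈ (Icc 1 (n - 1)).powerset,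
          (-1) ^ J.card * (peakCoeff q (eqSet g) J * (q + 1) ^ (image g univ).card) := sum_comm
    _ = 0 := sum_eq_zero fun g _ => by
        have : Nonempty (Fin n) := ⟨⟨0, hn⟩⟩
        obtain ⟨k, hk⟩ := Nat.exists_eq_add_one_of_ne_zero (univ_nonempty.image g).card_pos.ne'
        have h := one_add_mul_sum_neg_one_pow_mul_peakCoeff_eq_zero (N := n - 1)
          (E := eqSet g) (by rwa [Nat.sub_add_cancel hn]) (filter_subset _ _)
        calc _ = (q + 1) ^ k * ((1 + q) * ∑ J ∈ (Icc 1 (n - 1)).powerset,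
              (-1) ^ J.card * peakCoeff q (eqSet g) J) := by
              rw [hk, mul_sum, mul_sum]
              exact sum_congr rfl fun J _ => by ring
          _ = 0 := by rw [h, mul_zero]

lemma linearIndependent_subtype_subset_iff {α R M : Type*} [Ring R] [AddCommGroup M] [Module R M]
    (S : Finset α) (v : Finset α → M) :
    LinearIndependent R (fun I : {I // I ⊆ S} => v I.1) ↔
      ∀ c : Finset α → R, ∑ I ∈ S.powerset, c I • v I = 0 → ∀ I ∈ S.powerset, c I = 0 := by
  rw [← linearIndepOn_finset_iff, LinearIndepOn, ← linearIndependent_equiv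
    (Equiv.subtypeEquivRight (p := fun I => I ⊆ S) (q := (· ∈ (S.powerset : Set (Finset α))))
      fun I => by simp)]
  rfl

lemma eq_zero_of_sum_smul_Lq_eq_zero {q : ℂ} (hq : ∀ m, 1 ≤ m → q ^ m ≠ 1) {n : ℕ}
    {c : Finset ℕ → ℂ} (hc : ∑ J ∈ (Icc 1 (n - 1)).powerset, c J • Lq q n J = 0) :
    ∀ J ∈ (Icc 1 (n - 1)).powerset, c J = 0 := by
  have hq1 : q + 1 ≠ 0 := fun h => hq 2 one_le_two (by rw [eq_neg_of_add_eq_zero_left h]; norm_num)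
  refine eq_zero_of_sum_mul_peakCoeff_eq_zero (neg_geom_sum_ne_zero hq) fun E hE => ?_
  have h := congrArg (MvPowerSeries.coeff (monomialOf (stairSeq n E))) hc
  rw [map_sum, map_zero] at h
  have hcoeff : ∑ J ∈ (Icc 1 (n - 1)).powerset,
      MvPowerSeries.coeff (monomialOf (stairSeq n E)) (c J • Lq q n J) =
        (∑ J ∈ (Icc 1 (n - 1)).powerset, c J * peakCoeff q E J) *
          (q + 1) ^ (image (stairSeq n E) univ).card := by
    rw [sum_mul]
    refine sum_congr rfl fun J hJ => ?_
    rw [MvPowerSeries.coeff_smul, MvPowerSeries.coeff_apply,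
      Lq_apply_monomialOf q (monotone_stairSeq n E) (one_le_stairSeq n E) (mem_powerset.mp hJ),
      eqSet_stairSeq (mem_powerset.mp hE), mul_assoc]
  rw [hcoeff] at h
  exact (mul_eq_zero.mp h).resolve_right (pow_ne_zero _ hq1)

/-- The families `(L^{(q)}_{n,I})_{I ⊆ [n-1]}` are linearly independent
for every `n ≥ 1` if and only if `q` is not a root of unity. -/
theorem Lq_linearIndependent_iff_not_root_of_unity (q : ℂ) :
    (∀ n : ℕ, 1 ≤ n →
        LinearIndependent ℂ
          (fun I : {I : Finset ℕ // I ⊆ Finset.Icc 1 (n - 1)} => Lq q n I.1)) ↔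
      (∀ m : ℕ, 1 ≤ m → q ^ m ≠ 1) := by
  simp only [linearIndependent_subtype_subset_iff]
  constructor
  · intro hli m hm hqm
    have hneg : (-q) ^ (2 * m) = 1 := by rw [(even_two_mul m).neg_pow, pow_mul', hqm, one_pow]
    have h := hli (2 * m) (by omega) (fun J => (-1) ^ J.card)
      (sum_neg_one_pow_smul_Lq_eq_zero (by omega) hneg) ∅ (empty_mem_powerset _)
    simp at h
  · exact fun hq _ _ _ => eq_zero_of_sum_smul_Lq_eq_zero hq

end ExtPeaks
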